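/- arXiv:2312.03006 — 6 statements merged into one kernel-verified Lean document; each statement's English description precedes it below -/
import Mathlib

section
/- The cone ranking function is affine equivariant: for any invertible matrix A ∈ ℝ^{d×d} and vector b ∈ ℝ^d, r_{AX+b, AC}(Az + b) = r_{X,C}(z) for all z ∈ ℝ^d. -/
open scoped BigOperators

noncomputable section

/-- Euclidean dot product on `Fin d → ℝ`. -/
def dotp {d : ℕ} (w x : Fin d → ℝ) : ℝ := ∑ i, w i * x i

/-- The dual cone `C⁺ = {v | ∀ z ∈ C, vᵀz ≥ 0}`. -/
def dCone {d : ℕ} (C : Set (Fin d → ℝ)) : Set (Fin d → ℝ) := {v | ∀ z ∈ C, 0 ≤ dotp v z}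

/-- The w-ranking function `r_{X,w}(z) = #{x ∈ X | wᵀx ≤ wᵀz}`. -/
def rankW {d : ℕ} (X : Set (Fin d → ℝ)) (w z : Fin d → ℝ) : ℕ :=
  {x ∈ X | dotp w x ≤ dotp w z}.ncard

/-- The cone ranking function `r_{X,C}(z) = min_{w ∈ C⁺\{0}} r_{X,w}(z)`. -/
def rankC {d : ℕ} (X C : Set (Fin d → ℝ)) (z : Fin d → ℝ) : ℕ :=
  sInf ((fun w => rankW X w z) '' (dCone C \ {0}))


lemma dotp_eq {d : ℕ} (w x : Fin d → ℝ) : dotp w x = dotProduct w x := rfl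

lemma dotp_mulVec {d : ℕ} (A : Matrix (Fin d) (Fin d) ℝ) (w x : Fin d → ℝ) :
    dotp w (A.mulVec x) = dotp (A.vecMul w) x := by
  simp [dotp_eq, Matrix.dotProduct_mulVec]

lemma dotp_add {d : ℕ} (w x y : Fin d → ℝ) :
    dotp w (x + y) = dotp w x + dotp w y := by
  simp [dotp_eq, dotProduct_add]

theorem cone_ranking_affine_equivariant {d : ℕ}
    (X : Set (Fin d → ℝ)) (hX : X.Finite) (C : Set (Fin d → ℝ))
    (hCcl : IsClosed C) (hCcv : Convex ℝ C)
    (hCcone : ∀ c ∈ C, ∀ s : ℝ, 0 ≤ s → s • c ∈ C)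
    (hCne : C.Nonempty) (hCpr : C ≠ Set.univ)
    (A : Matrix (Fin d) (Fin d) ℝ) (hA : IsUnit A.det) (b : Fin d → ℝ)
    (z : Fin d → ℝ) :
    rankC ((fun x => A.mulVec x + b) '' X) (A.mulVec '' C) (A.mulVec z + b)
      = rankC X C z := by
  classical
  have hinvA : A * A⁻¹ = 1 := Matrix.mul_nonsing_inv A hA
  have hAinv : A⁻¹ * A = 1 := Matrix.nonsing_inv_mul A hA
  have hinj : Function.Injective (fun x : Fin d → ℝ => A.mulVec x + b) := by
    intro x y h
    have h2 : A.mulVec x = A.mulVec y := by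
      have := congrArg (fun u => u - b) h
      simpa using this
    have := congrArg (fun u => (A⁻¹).mulVec u) h2
    simpa [Matrix.mulVec_mulVec, hAinv] using this
  -- rankW transformation
  have hrankW : ∀ w : Fin d → ℝ,
      rankW ((fun x => A.mulVec x + b) '' X) w (A.mulVec z + b)
        = rankW X (A.vecMul w) z := by
    intro w
    unfold rankW
    have hset : {y ∈ (fun x => A.mulVec x + b) '' X |
        dotp w y ≤ dotp w (A.mulVec z + b)}
        = (fun x => A.mulVec x + b) ''
          {x ∈ X | dotp (A.vecMul w) x ≤ dotp (A.vecMul w) z} := by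
      ext y
      simp only [Set.mem_setOf_eq, Set.mem_image]
      constructor
      · rintro ⟨⟨x, hx, rfl⟩, hle⟩
        refine ⟨x, ⟨hx, ?_⟩, rfl⟩
        have := hle
        rwa [dotp_add, dotp_add, dotp_mulVec, dotp_mulVec,
          add_le_add_iff_right] at this
      · rintro ⟨x, ⟨hx, hle⟩, rfl⟩
        refine ⟨⟨x, hx, rfl⟩, ?_⟩
        rw [dotp_add, dotp_add, dotp_mulVec, dotp_mulVec,
          add_le_add_iff_right]
        exact hle
    rw [hset, Set.ncard_image_of_injective _ hinj]
  -- dual cone correspondence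
  have hdual : ∀ w : Fin d → ℝ,
      w ∈ dCone (A.mulVec '' C) ↔ A.vecMul w ∈ dCone C := by
    intro w
    constructor
    · intro hw c hc
      have := hw (A.mulVec c) ⟨c, hc, rfl⟩
      rwa [dotp_mulVec] at this
    · intro hw y hy
      obtain ⟨c, hc, rfl⟩ := hy
      rw [dotp_mulVec]
      exact hw c hc
  have hne : ∀ w : Fin d → ℝ, A.vecMul w = 0 → w = 0 := by
    intro w hw
    have : A⁻¹.vecMul (A.vecMul w) = A⁻¹.vecMul 0 := by rw [hw]
    rwa [Matrix.vecMul_vecMul, hinvA, Matrix.vecMul_one,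
      Matrix.zero_vecMul] at this
  -- equality of value sets
  have hsets : (fun w => rankW ((fun x => A.mulVec x + b) '' X) w (A.mulVec z + b)) ''
      (dCone (A.mulVec '' C) \ {0})
      = (fun w => rankW X w z) '' (dCone C \ {0}) := by
    ext n
    simp only [Set.mem_image, Set.mem_diff, Set.mem_singleton_iff]
    constructor
    · rintro ⟨w, ⟨hw, hw0⟩, rfl⟩
      refine ⟨A.vecMul w, ⟨(hdual w).1 hw, ?_⟩, (hrankW w).symm⟩
      intro h
      exact hw0 (hne w h)
    · rintro ⟨v, ⟨hv, hv0⟩, rfl⟩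
      refine ⟨A⁻¹.vecMul v, ⟨?_, ?_⟩, ?_⟩
      · rw [hdual]
        rwa [Matrix.vecMul_vecMul, hAinv, Matrix.vecMul_one]
      · intro h
        apply hv0
        have := congrArg (A.vecMul ·) h
        simpa [Matrix.vecMul_vecMul, hAinv, Matrix.vecMul_one,
          Matrix.vecMul_zero] using this
      · rw [hrankW, Matrix.vecMul_vecMul, hAinv, Matrix.vecMul_one]
  unfold rankC
  rw [hsets]
end
end

section
/- If C is a pointed polyhedral cone with nonempty interior, then any maximizer of r_{X,C} over X is Pareto maximal in X with respect to the order induced by C: if x̄ ∈ X satisfies r_{X,C}(x̄) = max_{x ∈ X} r_{X,C}(x), then there is no y ∈ X with y ≠ x̄ and y - x̄ ∈ C. -/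
open scoped BigOperators

noncomputable section

/-! Suppose `y ∈ X`, `y ≠ x̄` and `y - x̄ ∈ C`. Since `C` is cut out by finitely many inequalities
`vᵢᵀz ≥ 0` and is pointed, some `vᵢ ∈ C⁺` is strictly positive on `y - x̄`. Take `w ∈ C⁺ \ {0}`
realising `r_{X,C}(y)` and tilt it slightly towards `vᵢ`: the tilted functional still lies in `C⁺`,
ranks `x̄` strictly below `y`, and (for small enough tilt, `X` being finite) counts no more points
below `y` than `w` does. Hence `r_{X,C}(x̄) < r_{X,C}(y)`, so `x̄` is not a maximiser. -/

open Filter Topology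

lemma dotp_eq_dotProduct {d : ℕ} (w x : Fin d → ℝ) : dotp w x = w ⬝ᵥ x := rfl

lemma dotp_add_smul_left {d : ℕ} (w w₀ x : Fin d → ℝ) (ε : ℝ) :
    dotp (w + ε • w₀) x = dotp w x + ε * dotp w₀ x := by
  simp only [dotp_eq_dotProduct, add_dotProduct, smul_dotProduct, smul_eq_mul]

lemma add_smul_mem_dCone {d : ℕ} {C : Set (Fin d → ℝ)} {w w₀ : Fin d → ℝ}
    (hw : w ∈ dCone C) (hw₀ : w₀ ∈ dCone C) {ε : ℝ} (hε : 0 ≤ ε) : w + ε • w₀ ∈ dCone C := by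
  intro z hz
  rw [dotp_add_smul_left]
  exact add_nonneg (hw z hz) (mul_nonneg hε (hw₀ z hz))

lemma exists_dCone_dotp_pos_of_pointed {d n : ℕ} {C : Set (Fin d → ℝ)}
    (v : Fin n → Fin d → ℝ) (hC : C = {z | ∀ i, 0 ≤ dotp (v i) z})
    (hpointed : ∀ x ∈ C, -x ∈ C → x = 0) {c : Fin d → ℝ} (hc : c ∈ C) (hc0 : c ≠ 0) :
    ∃ w ∈ dCone C, 0 < dotp w c := by
  subst hC
  have hv : ∀ i, v i ∈ dCone {z | ∀ i, 0 ≤ dotp (v i) z} := fun i z hz => hz i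
  by_contra! hle
  refine hc0 (hpointed c hc fun i => ?_)
  rw [dotp_eq_dotProduct, dotProduct_neg, neg_nonneg]
  exact hle _ (hv i)

lemma rankC_le_rankW {d : ℕ} (X C : Set (Fin d → ℝ)) {w : Fin d → ℝ}
    (hw : w ∈ dCone C \ {0}) (z : Fin d → ℝ) : rankC X C z ≤ rankW X w z :=
  Nat.sInf_le ⟨w, hw, rfl⟩

lemma exists_rankW_eq_rankC {d : ℕ} (X C : Set (Fin d → ℝ)) (hC : (dCone C \ {0}).Nonempty)
    (z : Fin d → ℝ) : ∃ w ∈ dCone C \ {0}, rankW X w z = rankC X C z :=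
  Nat.sInf_mem (hC.image _)

lemma rankW_lt_of_dotp_lt {d : ℕ} {X : Set (Fin d → ℝ)} (hX : X.Finite) {w x y : Fin d → ℝ}
    (hy : y ∈ X) (hxy : dotp w x < dotp w y) : rankW X w x < rankW X w y := by
  refine Set.ncard_lt_ncard ?_ (hX.subset fun _ h => h.1)
  have hsub : {z ∈ X | dotp w z ≤ dotp w x} ⊆ {z ∈ X | dotp w z ≤ dotp w y} :=
    fun z hz => ⟨hz.1, hz.2.trans hxy.le⟩
  exact (Set.ssubset_iff_of_subset hsub).2 ⟨y, ⟨hy, le_rfl⟩, fun h => (h.2.trans_lt hxy).false⟩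

lemma eventually_rankW_add_smul_le {d : ℕ} {X : Set (Fin d → ℝ)} (hX : X.Finite)
    (w w₀ y : Fin d → ℝ) : ∀ᶠ ε in 𝓝 (0 : ℝ), rankW X (w + ε • w₀) y ≤ rankW X w y := by
  have hstable : ∀ᶠ ε in 𝓝 (0 : ℝ), ∀ x ∈ X,
      dotp w y < dotp w x → dotp (w + ε • w₀) y < dotp (w + ε • w₀) x := by
    refine hX.eventually_all.2 fun x _ => ?_
    by_cases hlt : dotp w y < dotp w x
    · have hcont : ∀ z, Continuous fun ε : ℝ => dotp (w + ε • w₀) z := fun z => by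
        simp only [dotp_add_smul_left]; fun_prop
      refine ((hcont y).continuousAt.eventually_lt (hcont x).continuousAt ?_).mono fun _ h _ => h
      simpa using hlt
    · exact Eventually.of_forall fun _ h => absurd h hlt
  refine hstable.mono fun ε hε => Set.ncard_le_ncard ?_ (hX.subset fun _ h => h.1)
  rintro x ⟨hx, hle⟩
  exact ⟨hx, not_lt.1 fun hlt => (hε x hx hlt).not_ge hle⟩

lemma rankC_lt_rankC_of_sub_mem {d : ℕ} {X C : Set (Fin d → ℝ)} (hX : X.Finite)
    {x y w₀ : Fin d → ℝ} (hy : y ∈ X) (hyx : y - x ∈ C) (hw₀ : w₀ ∈ dCone C)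
    (hpos : 0 < dotp w₀ (y - x)) : rankC X C x < rankC X C y := by
  have hw₀ne : w₀ ≠ 0 := by rintro rfl; simp [dotp_eq_dotProduct] at hpos
  obtain ⟨w, ⟨hw, -⟩, hwy⟩ := exists_rankW_eq_rankC X C ⟨w₀, ⟨hw₀, hw₀ne⟩⟩ y
  obtain ⟨ε, hε, hεy⟩ := (eventually_rankW_add_smul_le hX w w₀ y).exists_gt
  have htilt : dotp (w + ε • w₀) x < dotp (w + ε • w₀) y := by
    have : 0 < dotp (w + ε • w₀) (y - x) := by
      rw [dotp_add_smul_left]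
      exact add_pos_of_nonneg_of_pos (hw _ hyx) (mul_pos hε hpos)
    rwa [dotp_eq_dotProduct, dotProduct_sub, sub_pos] at this
  have hne : w + ε • w₀ ≠ 0 := by
    intro h; simp [h, dotp_eq_dotProduct] at htilt
  calc rankC X C x ≤ rankW X (w + ε • w₀) x :=
        rankC_le_rankW X C ⟨add_smul_mem_dCone hw hw₀ hε.le, hne⟩ x
    _ < rankW X (w + ε • w₀) y := rankW_lt_of_dotp_lt hX hy htilt
    _ ≤ rankW X w y := hεy
    _ = rankC X C y := hwy

theorem maximizer_is_pareto_maximal_general {d : ℕ}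
    (X : Set (Fin d → ℝ)) (hX : X.Finite) (C : Set (Fin d → ℝ))
    (hpointed : ∀ x ∈ C, -x ∈ C → x = 0) (hpoly : ∃ (n : ℕ) (v : Fin n → (Fin d → ℝ)), C = {z | ∀ i, 0 ≤ dotp (v i) z})
    (xbar : Fin d → ℝ)
    (hmax : ∀ x ∈ X, rankC X C x ≤ rankC X C xbar) :
    ∀ y ∈ X, y - xbar ∈ C → y = xbar := by
  intro y hy hyx
  by_contra hne
  obtain ⟨n, v, hC⟩ := hpoly
  obtain ⟨w₀, hw₀, hpos⟩ :=
    exists_dCone_dotp_pos_of_pointed v hC hpointed hyx (sub_ne_zero.2 hne)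
  exact (hmax y hy).not_gt (rankC_lt_rankC_of_sub_mem hX hy hyx hw₀ hpos)

theorem maximizer_is_pareto_maximal {d : ℕ}
    (X : Set (Fin d → ℝ)) (hX : X.Finite) (C : Set (Fin d → ℝ))
    (hCcl : IsClosed C) (hCcv : Convex ℝ C)
    (hCcone : ∀ c ∈ C, ∀ s : ℝ, 0 ≤ s → s • c ∈ C)
    (hCne : C.Nonempty) (hCpr : C ≠ Set.univ)
    (hpointed : ∀ x ∈ C, -x ∈ C → x = 0) (hpoly : ∃ (n : ℕ) (v : Fin n → (Fin d → ℝ)), C = {z | ∀ i, 0 ≤ dotp (v i) z})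
    (hint : (interior C).Nonempty)
    (xbar : Fin d → ℝ) (hxbar : xbar ∈ X)
    (hmax : ∀ x ∈ X, rankC X C x ≤ rankC X C xbar) :
    ∀ y ∈ X, y - xbar ∈ C → y = xbar :=
  maximizer_is_pareto_maximal_general X hX C hpointed hpoly xbar hmax
end
end

section
/- No rank reversal can occur between comparable alternatives: if x, y ∈ X with y - x ∈ C, then for every finite superset Z ⊇ X one has r_{Z,C}(x) ≤ r_{Z,C}(y); in particular the ordering of x below y is preserved under addition of new alternatives. -/
open scoped BigOperators

noncomputable section

theorem no_rank_reversal_for_comparable {d : ℕ}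
    (X : Set (Fin d → ℝ)) (hX : X.Finite) (C : Set (Fin d → ℝ))
    (hCcl : IsClosed C) (hCcv : Convex ℝ C)
    (hCcone : ∀ c ∈ C, ∀ s : ℝ, 0 ≤ s → s • c ∈ C)
    (hCne : C.Nonempty) (hCpr : C ≠ Set.univ)
    (x y : Fin d → ℝ) (hx : x ∈ X) (hy : y ∈ X) (hxy : y - x ∈ C) :
    ∀ Z : Set (Fin d → ℝ), Z.Finite → X ⊆ Z →
      rankC Z C x ≤ rankC Z C y := by
  intro Z hZfin _
  by_cases hS : (dCone C \ {0} : Set (Fin d → ℝ)).Nonempty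
  · -- pick w attaining the infimum for y
    have hne : ((fun w => rankW Z w y) '' (dCone C \ {0})).Nonempty := hS.image _
    obtain ⟨w, hwS, hwy⟩ := Nat.sInf_mem hne
    have hwx : dotp w x ≤ dotp w y := by
      have h0 : 0 ≤ dotp w (y - x) := hwS.1 _ hxy
      have : dotp w (y - x) = dotp w y - dotp w x := by
        simp [dotp, mul_sub, Finset.sum_sub_distrib]
      linarith [h0, this ▸ h0]
    have hle : rankW Z w x ≤ rankW Z w y := by
      apply Set.ncard_le_ncard
      · intro z hz
        exact ⟨hz.1, le_trans hz.2 hwx⟩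
      · exact hZfin.subset (Set.sep_subset _ _)
    calc rankC Z C x ≤ rankW Z w x := Nat.sInf_le ⟨w, hwS, rfl⟩
      _ ≤ rankW Z w y := hle
      _ = rankC Z C y := hwy
  · have h : (dCone C \ {0} : Set (Fin d → ℝ)) = ∅ :=
      Set.not_nonempty_iff_eq_empty.mp hS
    simp [rankC, h]
end
end

section
/- If x, y ∈ X are not comparable with respect to ≤_C and C is polyhedral and pointed with nonempty interior, then r_{X,C}(x) ≥ 1 and r_{X,C}(y) ≥ 1, and in particular for X = {x, y} one has r_{X,C}(x) = r_{X,C}(y) = 1. -/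
open scoped BigOperators

noncomputable section

lemma dotp_clm {d : ℕ} (f : (Fin d → ℝ) →L[ℝ] ℝ) (z : Fin d → ℝ) :
    dotp (fun i => f (Pi.single i 1)) z = f z := by
  have hz : z = ∑ i, Pi.single i (z i) := (Finset.univ_sum_single z).symm
  conv_rhs => rw [hz]
  rw [map_sum]
  unfold dotp
  refine Finset.sum_congr rfl fun i _ => ?_
  have : Pi.single i (z i) = z i • (Pi.single i (1 : ℝ) : Fin d → ℝ) := by
    ext j
    by_cases hji : j = i
    · subst hji; simp [Pi.single_apply]
    · simp [Pi.single_apply, hji]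
  rw [this, map_smul, smul_eq_mul, mul_comm]

/-- Separation: a point outside a closed convex cone admits a dual vector negative on it. -/
lemma sep_cone {d : ℕ} (C : Set (Fin d → ℝ)) (hCcl : IsClosed C) (hCcv : Convex ℝ C)
    (hCcone : ∀ c ∈ C, ∀ s : ℝ, 0 ≤ s → s • c ∈ C) (hCne : C.Nonempty)
    {p : Fin d → ℝ} (hp : p ∉ C) :
    ∃ w ∈ dCone C \ {0}, dotp w p < 0 := by
  obtain ⟨c, hc⟩ := hCne
  have h0 : (0 : Fin d → ℝ) ∈ C := by
    have := hCcone c hc 0 le_rfl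
    simpa using this
  obtain ⟨f, u, hfs, hup⟩ := geometric_hahn_banach_closed_point hCcv hCcl hp
  have hu0 : 0 < u := by simpa using hfs 0 h0
  have hfz : ∀ z ∈ C, f z ≤ 0 := by
    intro z hz
    by_contra h
    push_neg at h
    have hs : (0:ℝ) ≤ (u + 1) / f z := by positivity
    have := hfs _ (hCcone z hz _ hs)
    rw [map_smul, smul_eq_mul, div_mul_cancel₀ _ (ne_of_gt h)] at this
    linarith
  refine ⟨fun i => -(f (Pi.single i 1)), ⟨?_, ?_⟩, ?_⟩
  · intro z hz
    have : dotp (fun i => -(f (Pi.single i 1))) z = -(f z) := by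
      have := dotp_clm f z
      unfold dotp at this ⊢
      simp only [neg_mul, Finset.sum_neg_distrib]
      rw [this]
    rw [this]
    linarith [hfz z hz]
  · intro hw0
    have hfp : f p > 0 := lt_trans hu0 hup
    have : dotp (fun i => -(f (Pi.single i 1))) p = -(f p) := by
      have := dotp_clm f p
      unfold dotp at this ⊢
      simp only [neg_mul, Finset.sum_neg_distrib]
      rw [this]
    rw [Set.mem_singleton_iff] at hw0
    rw [hw0] at this
    unfold dotp at this
    simp at this
    linarith
  · have : dotp (fun i => -(f (Pi.single i 1))) p = -(f p) := by
      have := dotp_clm f p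
      unfold dotp at this ⊢
      simp only [neg_mul, Finset.sum_neg_distrib]
      rw [this]
    rw [this]
    linarith [lt_trans hu0 hup]

theorem noncomparable_ranking {d : ℕ}
    (X : Set (Fin d → ℝ)) (hX : X.Finite) (C : Set (Fin d → ℝ))
    (hCcl : IsClosed C) (hCcv : Convex ℝ C)
    (hCcone : ∀ c ∈ C, ∀ s : ℝ, 0 ≤ s → s • c ∈ C)
    (hCne : C.Nonempty) (hCpr : C ≠ Set.univ)
    (hpointed : ∀ x ∈ C, -x ∈ C → x = 0) (hpoly : ∃ (n : ℕ) (v : Fin n → (Fin d → ℝ)), C = {z | ∀ i, 0 ≤ dotp (v i) z})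
    (hint : (interior C).Nonempty)
    (x y : Fin d → ℝ) (hx : x ∈ X) (hy : y ∈ X)
    (h1 : y - x ∉ C) (h2 : x - y ∉ C) :
    1 ≤ rankC X C x ∧ 1 ≤ rankC X C y ∧
      (X = {x, y} → rankC X C x = 1 ∧ rankC X C y = 1) := by
  -- from h2 : x - y ∉ C get w with wᵀ(x-y) < 0, i.e. wᵀx < wᵀy
  obtain ⟨w, hw, hwxy⟩ := sep_cone C hCcl hCcv hCcone hCne h2
  obtain ⟨w', hw', hwyx⟩ := sep_cone C hCcl hCcv hCcone hCne h1
  have hxy : dotp w x < dotp w y := by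
    have : dotp w (x - y) = dotp w x - dotp w y := by
      unfold dotp; rw [← Finset.sum_sub_distrib]
      exact Finset.sum_congr rfl fun i _ => by simp [mul_sub]
    rw [this] at hwxy; linarith
  have hyx : dotp w' y < dotp w' x := by
    have : dotp w' (y - x) = dotp w' y - dotp w' x := by
      unfold dotp; rw [← Finset.sum_sub_distrib]
      exact Finset.sum_congr rfl fun i _ => by simp [mul_sub]
    rw [this] at hwyx; linarith
  -- general lower bound
  have hlow : ∀ z ∈ X, 1 ≤ rankC X C z := by
    intro z hz
    refine le_csInf ⟨rankW X w z, Set.mem_image_of_mem _ hw⟩ ?_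
    rintro b ⟨v, _, rfl⟩
    have hfin : {a ∈ X | dotp v a ≤ dotp v z}.Finite := hX.subset (Set.sep_subset _ _)
    have hne : {a ∈ X | dotp v a ≤ dotp v z}.Nonempty := ⟨z, hz, le_rfl⟩
    exact (Set.ncard_pos hfin).mpr hne
  refine ⟨hlow x hx, hlow y hy, fun hXxy => ?_⟩
  have key : ∀ (v z z' : Fin d → ℝ), z ≠ z' → dotp v z < dotp v z' → rankW {z, z'} v z = 1 := by
    intro v z z' hne hlt
    have : {a ∈ ({z, z'} : Set (Fin d → ℝ)) | dotp v a ≤ dotp v z} = {z} := by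
      ext a
      constructor
      · rintro ⟨ha, hle⟩
        rcases ha with rfl | rfl
        · rfl
        · exact absurd hle (not_le.mpr hlt)
      · rintro rfl; exact ⟨Or.inl rfl, le_rfl⟩
    rw [rankW, this, Set.ncard_singleton]
  have hne : x ≠ y := by
    rintro rfl
    exact h2 (by simpa using (by simpa using hCcone _ hCne.choose_spec 0 le_rfl : (0:Fin d → ℝ) ∈ C))
  constructor
  · refine le_antisymm ?_ (by rw [hXxy] at hlow ⊢; exact hlow x (Or.inl rfl))
    rw [hXxy]
    have : rankW {x, y} w x = 1 := key w x y hne hxy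
    exact this ▸ Nat.sInf_le (Set.mem_image_of_mem _ hw)
  · refine le_antisymm ?_ (by rw [hXxy] at hlow ⊢; exact hlow y (Or.inr rfl))
    rw [hXxy]
    have : rankW {x, y} w' y = 1 := by
      have := key w' y x (Ne.symm hne) hyx
      have hcomm : ({y, x} : Set (Fin d → ℝ)) = {x, y} := Set.pair_comm y x
      rwa [hcomm] at this
    exact this ▸ Nat.sInf_le (Set.mem_image_of_mem _ hw')
end
end

section
/- The set cone ranking function is invariant under subtraction of the cone: R^▽_C(A - C) = R^▽_C(A) for every nonempty A ⊆ ℝ^d, where A - C = {a - c | a ∈ A, c ∈ C}. -/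
open scoped BigOperators

noncomputable section

/-- The set cone ranking function `R^▽_C(A) = sup_{a ∈ A} r_{X,C}(a)`. -/
def Rdown {d : ℕ} (X C : Set (Fin d → ℝ)) (A : Set (Fin d → ℝ)) : ℕ :=
  sSup (rankC X C '' A)

lemma dotp_sub {d : ℕ} (w a c : Fin d → ℝ) : dotp w (a - c) = dotp w a - dotp w c := by
  simp [dotp, mul_sub, Finset.sum_sub_distrib]

lemma rankW_le_ncard {d : ℕ} (X : Set (Fin d → ℝ)) (hX : X.Finite) (w z : Fin d → ℝ) :
    rankW X w z ≤ X.ncard := by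
  apply Set.ncard_le_ncard _ hX
  intro x hx; exact hx.1

lemma rankC_le_ncard {d : ℕ} (X C : Set (Fin d → ℝ)) (hX : X.Finite) (z : Fin d → ℝ) :
    rankC X C z ≤ X.ncard := by
  rcases (dCone C \ {0}).eq_empty_or_nonempty with h | ⟨w, hw⟩
  · simp [rankC, h]
  · exact le_trans (Nat.sInf_le ⟨w, hw, rfl⟩) (rankW_le_ncard X hX w z)

lemma rankC_sub_le {d : ℕ} (X C : Set (Fin d → ℝ)) (hX : X.Finite)
    (a c : Fin d → ℝ) (hc : c ∈ C) : rankC X C (a - c) ≤ rankC X C a := by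
  rcases (dCone C \ {0}).eq_empty_or_nonempty with h | hne
  · simp [rankC, h]
  · obtain ⟨w, hw, hwmin⟩ : ∃ w ∈ dCone C \ {0},
        rankW X w a = sInf ((fun w => rankW X w a) '' (dCone C \ {0})) := by
      have : ((fun w => rankW X w a) '' (dCone C \ {0})).Nonempty := hne.image _
      obtain ⟨w, hw, hwe⟩ := Nat.sInf_mem this
      exact ⟨w, hw, hwe⟩
    have hle : rankW X w (a - c) ≤ rankW X w a := by
      apply Set.ncard_le_ncard _ (hX.subset (fun x hx => hx.1))
      intro x hx
      refine ⟨hx.1, le_trans hx.2 ?_⟩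
      rw [dotp_sub]
      linarith [hw.1 c hc]
    calc rankC X C (a - c) ≤ rankW X w (a - c) := Nat.sInf_le ⟨w, hw, rfl⟩
      _ ≤ rankW X w a := hle
      _ = rankC X C a := hwmin

theorem set_ranking_cone_invariant {d : ℕ}
    (X : Set (Fin d → ℝ)) (hX : X.Finite) (C : Set (Fin d → ℝ))
    (hCcl : IsClosed C) (hCcv : Convex ℝ C)
    (hCcone : ∀ c ∈ C, ∀ s : ℝ, 0 ≤ s → s • c ∈ C)
    (hCne : C.Nonempty) (hCpr : C ≠ Set.univ) (h0 : (0 : Fin d → ℝ) ∈ C)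
    (A : Set (Fin d → ℝ)) (hA : A.Nonempty) :
    Rdown X C (Set.image2 (· - ·) A C) = Rdown X C A := by
  have hbddA : BddAbove (rankC X C '' A) := by
    refine ⟨X.ncard, ?_⟩
    rintro n ⟨a, _, rfl⟩
    exact rankC_le_ncard X C hX a
  apply le_antisymm
  · apply csSup_le
    · exact (hA.image2 hCne).image _
    · rintro n ⟨z, ⟨a, ha, c, hc, rfl⟩, rfl⟩
      exact le_trans (rankC_sub_le X C hX a c hc)
        (le_csSup hbddA ⟨a, ha, rfl⟩)
  · apply csSup_le_csSup
    · refine ⟨X.ncard, ?_⟩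
      rintro n ⟨z, _, rfl⟩
      exact rankC_le_ncard X C hX z
    · exact hA.image _
    · apply Set.image_mono
      intro a ha
      exact ⟨a, ha, 0, h0, by simp⟩
end
end

section
/- The relation induced by 𝒞_X is a refinement of the set domination order on subsets of X: if A, B ⊆ X, A ⪰_C B (B ⊆ A - C) and B ⋡_C A (A ⊄ B - C), then 𝒞_X(A) > 𝒞_X(B). -/
open scoped BigOperators

noncomputable section

/-- The coverage indicator `𝒞_X(A) = #{x ∈ X | ∃ a ∈ A, a - x ∈ C}`. -/
def coverC {d : ℕ} (X C : Set (Fin d → ℝ)) (A : Set (Fin d → ℝ)) : ℕ :=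
  {x ∈ X | ∃ a ∈ A, a - x ∈ C}.ncard


theorem cover_indicator_refinement {d : ℕ}
    (X : Set (Fin d → ℝ)) (hX : X.Finite) (C : Set (Fin d → ℝ))
    (hCcl : IsClosed C) (hCcv : Convex ℝ C)
    (hCcone : ∀ c ∈ C, ∀ s : ℝ, 0 ≤ s → s • c ∈ C)
    (hCne : C.Nonempty) (hCpr : C ≠ Set.univ) (h0 : (0 : Fin d → ℝ) ∈ C)
    (hadd : ∀ a ∈ C, ∀ b ∈ C, a + b ∈ C)
    (A B : Set (Fin d → ℝ)) (hAX : A ⊆ X) (hBX : B ⊆ X)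
    (hAB : B ⊆ Set.image2 (· - ·) A C)
    (hnBA : ¬ A ⊆ Set.image2 (· - ·) B C) :
    coverC X C B < coverC X C A := by
  have hsub : {x ∈ X | ∃ b ∈ B, b - x ∈ C} ⊆ {x ∈ X | ∃ a ∈ A, a - x ∈ C} := by
    rintro x ⟨hxX, b, hb, hbx⟩
    obtain ⟨a, ha, c, hc, rfl⟩ := hAB hb
    refine ⟨hxX, a, ha, ?_⟩
    have := hadd _ hbx _ hc
    have : (a - c - x) + c = a - x := by abel
    rw [← this]
    exact hadd _ hbx _ hc
  obtain ⟨a, ha, hna⟩ := Set.not_subset.mp hnBA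
  have haA : a ∈ {x ∈ X | ∃ a' ∈ A, a' - x ∈ C} :=
    ⟨hAX ha, a, ha, by simpa using h0⟩
  have haB : a ∉ {x ∈ X | ∃ b ∈ B, b - x ∈ C} := by
    rintro ⟨-, b, hb, hba⟩
    exact hna ⟨b, hb, b - a, hba, sub_sub_cancel b a⟩
  exact Set.ncard_lt_ncard ⟨hsub, fun h => haB (h haA)⟩
    (hX.subset (Set.sep_subset _ _))
end
end
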